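/- Let G=(V,E) be a connected multigraph, Φ an admissible matching policy on G and μ∈ℳ(V). Let Φ̂ be a matching policy extending Φ on the minimal blow-up graph Ĝ and μ̂∈ℳ(V̂) a measure extending μ. Let Q be the quadratic function Q(ŵ)=Σ_{i∈V}|ŵ|_i² + Σ_{i∈V₁}|ŵ|_{i̲}² on states of the model on Ĝ. Then for every w∈𝕎 (which is also a state of the model on Ĝ), the one-step drifts satisfy Δ^Φ_μ Q(w) ≤ Δ̂^Φ̂_μ̂ Q(w). -/

import Mathlib

open scoped BigOperators

attribute [local instance] Classical.propDecidable

/-- A multigraph on the vertex set `V`: a symmetric binary relation on `V`,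
possibly with self-loops. -/
structure Multigraph (V : Type*) where
  Adj : V → V → Prop
  symm : ∀ u v, Adj u v → Adj v u

namespace Multigraph

variable {V : Type*}

/-- The neighborhood `E(U)` of a set `U` of vertices. -/
def nbhd (G : Multigraph V) (U : Set V) : Set V :=
  {v | ∃ u ∈ U, G.Adj u v}

/-- `V₁`, the set of self-looped vertices. -/
def loopSet (G : Multigraph V) : Set V := {v | G.Adj v v}

/-- `V₂`, the set of non-self-looped vertices. -/
def nonloopSet (G : Multigraph V) : Set V := {v | ¬ G.Adj v v}

/-- The maximal subgraph `Ǧ`, obtained by deleting all self-loops. -/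
def check (G : Multigraph V) : Multigraph V where
  Adj u v := G.Adj u v ∧ u ≠ v
  symm u v h := ⟨G.symm u v h.1, h.2.symm⟩

/-- An independent set: a nonempty set of pairwise non-adjacent vertices. -/
def IsIndep (G : Multigraph V) (I : Set V) : Prop :=
  I.Nonempty ∧ ∀ i ∈ I, ∀ j ∈ I, ¬ G.Adj i j

/-- Connectivity of a multigraph: any two nodes are joined by a path of edges. -/
def Connected (G : Multigraph V) : Prop :=
  ∀ u v : V, Relation.ReflTransGen G.Adj u v

/-- `G` is a bipartite graph: its vertex set splits into two parts such that every
edge joins the two parts (in particular, `G` has no self-loop). -/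
def IsBipartiteGraph (G : Multigraph V) : Prop :=
  ∃ A B : Set V, (∀ v, v ∈ A ∨ v ∈ B) ∧ (∀ v, ¬(v ∈ A ∧ v ∈ B)) ∧
    ∀ u v, G.Adj u v → (u ∈ A ∧ v ∈ B) ∨ (u ∈ B ∧ v ∈ A)

section Meas

variable [Fintype V]

/-- Total mass `μ(S)` of a set of vertices. -/
noncomputable def mass (μ : V → ℝ) (S : Set V) : ℝ := ∑ v, S.indicator μ v

/-- `μ ∈ ℳ(V)`: a probability measure with full support on `V`. -/
def FullSupport (μ : V → ℝ) : Prop := (∀ v, 0 < μ v) ∧ ∑ v, μ v = 1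

/-- The stability condition `Ncond(G)`: fully supported probability measures `μ` such
that `μ(I) < μ(E(I))` for every independent set `I` of `G`. -/
def Ncond (G : Multigraph V) (μ : V → ℝ) : Prop :=
  FullSupport μ ∧ ∀ I : Set V, G.IsIndep I → mass μ I < mass μ (G.nbhd I)

/-- The degree of a vertex: its number of neighbors (including itself if self-looped). -/
noncomputable def deg (G : Multigraph V) (i : V) : ℕ := (G.nbhd {i}).ncard

end Meas
section Chain

variable [DecidableEq V]

/-- The state space `𝕎` of admissible queue details. -/
def WSpace (G : Multigraph V) : Set (List V) :=
  {w | (∀ i j : V, i ≠ j → G.Adj i j → w.count i = 0 ∨ w.count j = 0) ∧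
    ∀ i : V, G.Adj i i → w.count i ≤ 1}

/-- An admissible matching policy: a (possibly random) transition rule which, in state
`w` upon the arrival of an item of class `v`, appends `v` when no compatible item is in
line, and otherwise deletes one stored item of a class compatible with `v`. -/
structure Policy (G : Multigraph V) where
  next : List V → V → List V → ℝ
  nonneg : ∀ w v w', 0 ≤ next w v w'
  total : ∀ w ∈ WSpace G, ∀ v : V, (∑' w' : List V, next w v w') = 1
  noMatch : ∀ w ∈ WSpace G, ∀ v : V, (∀ a ∈ w, ¬ G.Adj a v) → next w v (w ++ [v]) = 1
  matchRule : ∀ w ∈ WSpace G, ∀ v : V, (∃ a ∈ w, G.Adj a v) → ∀ w' : List V,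
    next w v w' ≠ 0 → ∃ k : Fin w.length, G.Adj (w.get k) v ∧ w' = w.eraseIdx k

/-- The transition kernel of the buffer-content Markov chain of the model `(G,Φ,μ)`. -/
noncomputable def kernel [Fintype V] (G : Multigraph V) (pol : Policy G) (μ : V → ℝ)
    (w w' : List V) : ℝ :=
  ∑ v : V, μ v * pol.next w v w'

/-- Irreducibility (on the state space `𝕎`) of a transition kernel. -/
def Irreducible (G : Multigraph V) (P : List V → List V → ℝ) : Prop :=
  ∀ w ∈ WSpace G, ∀ w' ∈ WSpace G, Relation.ReflTransGen (fun a b => 0 < P a b) w w'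

/-- A stationary probability distribution, supported on `𝕎`, for a transition kernel. -/
def IsStationary (G : Multigraph V) (P : List V → List V → ℝ) (π : List V → ℝ) :
    Prop :=
  (∀ w, 0 ≤ π w) ∧ (∀ w ∉ WSpace G, π w = 0) ∧ (∑' w : List V, π w) = 1 ∧
    ∀ w' : List V, (∑' w : List V, π w * P w w') = π w'

/-- Positive recurrence of the chain: irreducibility together with the existence of a
stationary probability distribution. -/
def PositiveRecurrent (G : Multigraph V) (P : List V → List V → ℝ) : Prop :=
  Irreducible G P ∧ ∃ π : List V → ℝ, IsStationary G P π

end Chain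
/-- The minimal blow-up graph `Ĝ` of `G`, on the vertex set `V̂ = V ∪ V̱₁`: each
self-looped node `i` is duplicated into `i` and a copy `i̱` having the same neighborhood,
the self-loop being replaced by the edge `(i, i̱)`; copies are encoded via `Sum.inr`. -/
def blowup (G : Multigraph V) : Multigraph (V ⊕ {v : V // G.Adj v v}) where
  Adj x y :=
    match x, y with
    | Sum.inl u, Sum.inl v => G.Adj u v ∧ u ≠ v
    | Sum.inl u, Sum.inr i => G.Adj i.1 u
    | Sum.inr i, Sum.inl u => G.Adj i.1 u
    | Sum.inr _, Sum.inr _ => False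
  symm := by
    rintro (u | i) (v | j) h
    · exact ⟨G.symm u v h.1, h.2.symm⟩
    · exact h
    · exact h
    · exact h
/-- `μ̂` extends `μ` on the blow-up graph `Ĝ`: `μ̂(i) = μ(i)` for `i ∈ V₂` and
`μ̂(i) + μ̂(i̱) = μ(i)` for `i ∈ V₁`. -/
def ExtendsMeasure (G : Multigraph V) (μ : V → ℝ)
    (μh : V ⊕ {v : V // G.Adj v v} → ℝ) : Prop :=
  (∀ v : V, ¬ G.Adj v v → μh (Sum.inl v) = μ v) ∧
  ∀ i : {v : V // G.Adj v v}, μh (Sum.inl i.1) + μh (Sum.inr i) = μ i.1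
/-- `Φ̂` extends `Φ` on `Ĝ`: whenever both systems are in the same state `w ∈ 𝕎`
and welcome the same arrival (so that the sets of available matches coincide), the
distribution of the chosen match is the same under `Φ̂` and `Φ`. -/
def ExtendsPolicy [DecidableEq V] (G : Multigraph V) (pol : Policy G)
    (polh : Policy (blowup G)) : Prop :=
  (∀ w ∈ WSpace G, ∀ v : V, ¬ (G.Adj v v ∧ v ∈ w) → ∀ w' : List V,
    polh.next (w.map Sum.inl) (Sum.inl v) (w'.map Sum.inl) = pol.next w v w') ∧
  ∀ w ∈ WSpace G, ∀ i : {v : V // G.Adj v v}, (∃ a ∈ w, G.Adj a i.1) → ∀ w' : List V,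
    polh.next (w.map Sum.inl) (Sum.inr i) (w'.map Sum.inl) = pol.next w i.1 w'
/-- The one-step drift of a functional `F` for the model `(G',Ψ,λ)` at state `w`:
`Δ F(w) = E[F(W_{n+1}) - F(W_n) | W_n = w]`. -/
noncomputable def drift {V' : Type*} [Fintype V'] [DecidableEq V'] (G' : Multigraph V')
    (pol : Policy G') (lam : V' → ℝ) (F : List V' → ℝ) (w : List V') : ℝ :=
  (∑ v : V', lam v * ∑' w' : List V', pol.next w v w' * F w') - F w
/-- The quadratic Lyapunov function `Q` on states of the blow-up model:
`Q(ŵ) = Σ_{i∈V} |ŵ|_i² + Σ_{i∈V₁} |ŵ|_{i̱}²`. -/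
noncomputable def Qfun [Fintype V] [DecidableEq V] (G : Multigraph V)
    (w : List (V ⊕ {v : V // G.Adj v v})) : ℝ :=
  (∑ i : V, (w.count (Sum.inl i) : ℝ) ^ 2) +
    ∑ i : {v : V // G.Adj v v}, (w.count (Sum.inr i) : ℝ) ^ 2
end Multigraph

open Multigraph

/-! An arrival of a class `v ∈ V` is matched in `Ĝ` only when it is matched in `G`, and then
with the same distribution; otherwise `Ĝ` stores `v`, which never decreases `Q`. An arrival of a
copy `i̲` is matched in `Ĝ` exactly when `i` is matched in `G`, again with the same distribution,
and otherwise both models store the item, which raises `Q` by one since `i ∉ w`. So the expected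
next value of `Q` for a class of `Ĝ` dominates that for the class of `G` it copies, and weighting
by `μ̂`, which projects onto `μ`, gives the inequality of drifts. -/

/-- Core derives `BEq` on sums without a `LawfulBEq` instance; `Qfun` counts with that `BEq`. -/
instance instLawfulBEqSum {α β : Type*} [BEq α] [BEq β] [LawfulBEq α] [LawfulBEq β] :
    LawfulBEq (α ⊕ β) where
  eq_of_beq {a b} h := by
    cases a <;> cases b <;> simp_all [BEq.beq, Sum.instBEq.beq]
  rfl {a} := by
    cases a <;> simp [BEq.beq, Sum.instBEq.beq]

section ProbabilityWeights

variable {α : Type*} {f g : α → ℝ}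

theorem summable_of_tsum_eq_one (h : ∑' x, f x = 1) : Summable f :=
  by_contra fun hf => one_ne_zero (h.symm.trans (tsum_eq_zero_of_not_summable hf))

theorem eq_zero_of_tsum_eq_one_of_eq_one (h0 : ∀ x, 0 ≤ f x) (h1 : ∑' x, f x = 1) {x y : α}
    (hx : f x = 1) (hy : y ≠ x) : f y = 0 := by
  have hpair := (summable_of_tsum_eq_one h1).sum_le_tsum {x, y} fun i _ => h0 i
  rw [Finset.sum_pair hy.symm, hx, h1] at hpair
  linarith [h0 y]

theorem tsum_mul_eq_of_eq_one (h0 : ∀ x, 0 ≤ f x) (h1 : ∑' x, f x = 1) {x : α}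
    (hx : f x = 1) (g : α → ℝ) : ∑' y, f y * g y = g x := by
  rw [tsum_eq_single x fun y hy => by rw [eq_zero_of_tsum_eq_one_of_eq_one h0 h1 hx hy, zero_mul],
    hx, one_mul]

theorem tsum_mul_le_of_tsum_eq_one (h0 : ∀ x, 0 ≤ f x) (h1 : ∑' x, f x = 1)
    (hg0 : ∀ x, 0 ≤ g x) {c : ℝ} (hgc : ∀ x, f x ≠ 0 → g x ≤ c) :
    ∑' x, f x * g x ≤ c := by
  have hle : ∀ x, f x * g x ≤ c * f x := fun x => by
    rcases eq_or_ne (f x) 0 with hx | hx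
    · simp [hx]
    · rw [mul_comm c]
      exact mul_le_mul_of_nonneg_left (hgc x hx) (h0 x)
  have hcf := (summable_of_tsum_eq_one h1).mul_left c
  calc ∑' x, f x * g x ≤ ∑' x, c * f x :=
        (hcf.of_nonneg_of_le (fun x => mul_nonneg (h0 x) (hg0 x)) hle).tsum_le_tsum hle hcf
    _ = c := by rw [tsum_mul_left, h1, mul_one]

end ProbabilityWeights

namespace Multigraph

namespace Policy

variable {V : Type*} [DecidableEq V] {H : Multigraph V} (P : Policy H)

noncomputable def expect (w : List V) (v : V) (F : List V → ℝ) : ℝ :=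
  ∑' w', P.next w v w' * F w'

theorem expect_of_forall_not_adj {w : List V} (hw : w ∈ WSpace H) {v : V}
    (h : ∀ a ∈ w, ¬ H.Adj a v) (F : List V → ℝ) : P.expect w v F = F (w ++ [v]) :=
  tsum_mul_eq_of_eq_one (P.nonneg w v) (P.total w hw v) (P.noMatch w hw v h) F

theorem expect_le_of_exists_adj {w : List V} (hw : w ∈ WSpace H) {v : V}
    (h : ∃ a ∈ w, H.Adj a v) {F : List V → ℝ} (hF0 : ∀ l, 0 ≤ F l)
    (hF : ∀ l₁ l₂, l₁.Sublist l₂ → F l₁ ≤ F l₂) : P.expect w v F ≤ F w :=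
  tsum_mul_le_of_tsum_eq_one (P.nonneg w v) (P.total w hw v) hF0 fun w' hw' => by
    obtain ⟨k, -, rfl⟩ := P.matchRule w hw v h w' hw'
    exact hF _ _ (w.eraseIdx_sublist k)

/-- A match only deletes an item, so from a state `l.map f` the policy stays in the image of
`List.map f`. -/
theorem expect_map_of_exists_adj {U : Type*} {f : U → V} (hf : Function.Injective f)
    {l : List U} (hl : l.map f ∈ WSpace H) {v : V} (h : ∃ a ∈ l.map f, H.Adj a v)
    (F : List V → ℝ) :
    P.expect (l.map f) v F = ∑' u : List U, P.next (l.map f) v (u.map f) * F (u.map f) := by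
  refine ((List.map_injective_iff.mpr hf).tsum_eq fun w' hw' => ?_).symm
  obtain ⟨k, -, rfl⟩ := P.matchRule _ hl v h w' (left_ne_zero_of_mul hw')
  exact ⟨l.eraseIdx k, (List.eraseIdx_map f l k).symm⟩

end Policy

variable {V : Type*} {G : Multigraph V}

section Quadratic

variable [Fintype V] [DecidableEq V]

theorem Qfun_eq_sum (l : List (V ⊕ {v : V // G.Adj v v})) :
    Qfun G l = ∑ x, (l.count x : ℝ) ^ 2 := by
  rw [Qfun, Fintype.sum_sum_type]

theorem Qfun_nonneg (l : List (V ⊕ {v : V // G.Adj v v})) : 0 ≤ Qfun G l := by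
  rw [Qfun_eq_sum]
  positivity

theorem Qfun_le_of_sublist {l₁ l₂ : List (V ⊕ {v : V // G.Adj v v})} (h : l₁.Sublist l₂) :
    Qfun G l₁ ≤ Qfun G l₂ := by
  rw [Qfun_eq_sum, Qfun_eq_sum]
  gcongr with x
  exact h.count_le x

theorem Qfun_append_singleton {l : List (V ⊕ {v : V // G.Adj v v})}
    {x : V ⊕ {v : V // G.Adj v v}} (hx : x ∉ l) : Qfun G (l ++ [x]) = Qfun G l + 1 := by
  rw [Qfun_eq_sum, Qfun_eq_sum]
  calc ∑ y, ((l ++ [x]).count y : ℝ) ^ 2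
        = ∑ y, ((l.count y : ℝ) ^ 2 + if x = y then 1 else 0) :=
        Finset.sum_congr rfl fun y _ => by
          rw [List.count_append, List.count_singleton]
          by_cases hxy : x = y
          · subst hxy
            simp [List.count_eq_zero.mpr hx]
          · simp [hxy]
    _ = ∑ y, (l.count y : ℝ) ^ 2 + 1 := by
        rw [Finset.sum_add_distrib, Finset.sum_ite_eq, if_pos (Finset.mem_univ x)]

end Quadratic

def blowupProj (G : Multigraph V) : V ⊕ {v : V // G.Adj v v} → V :=
  Sum.elim id Subtype.val

theorem ExtendsMeasure.sum_mul_comp_blowupProj [Fintype V] {μ : V → ℝ}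
    {μh : V ⊕ {v : V // G.Adj v v} → ℝ} (hem : ExtendsMeasure G μ μh) (f : V → ℝ) :
    ∑ x, μh x * f (blowupProj G x) = ∑ v, μ v * f v := by
  simp only [Fintype.sum_sum_type, blowupProj, Sum.elim_inl, Sum.elim_inr, id]
  rw [← Fintype.sum_subtype_add_sum_subtype (fun v => G.Adj v v) fun v => μh (Sum.inl v) * f v,
    ← Fintype.sum_subtype_add_sum_subtype (fun v => G.Adj v v) fun v => μ v * f v,
    add_right_comm, ← Finset.sum_add_distrib]
  congr 1
  · refine Finset.sum_congr rfl fun i _ => ?_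
    rw [← hem.2 i, add_mul]
  · exact Finset.sum_congr rfl fun v _ => by rw [hem.1 v v.2]

theorem map_inl_mem_WSpace_blowup [DecidableEq V] {w : List V} (hw : w ∈ WSpace G) :
    w.map Sum.inl ∈ WSpace (blowup G) := by
  refine ⟨?_, ?_⟩
  · rintro (u | i) (v | j) hne hadj
    · simp only [List.count_map_of_injective _ _ Sum.inl_injective]
      exact hw.1 u v (fun h => hne (h ▸ rfl)) hadj.1
    · exact Or.inr (by simp [List.count_eq_zero])
    · exact Or.inl (by simp [List.count_eq_zero])
    · exact hadj.elim
  · rintro (u | i) hadj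
    · exact absurd rfl hadj.2
    · exact hadj.elim

section Comparison

variable [Fintype V] [DecidableEq V] {pol : Policy G} {polh : Policy (blowup G)} {w : List V}

theorem expect_le_expect_blowup_inl (hext : ExtendsPolicy G pol polh) (hw : w ∈ WSpace G)
    (v : V) :
    pol.expect w v (fun u => Qfun G (u.map Sum.inl)) ≤
      polh.expect (w.map Sum.inl) (Sum.inl v) (Qfun G) := by
  have hwh := map_inl_mem_WSpace_blowup hw
  by_cases hmatch : ∃ a ∈ w.map Sum.inl, (blowup G).Adj a (Sum.inl v)
  · obtain ⟨_, ha, hadj⟩ := hmatch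
    obtain ⟨b, hb, rfl⟩ := List.mem_map.mp ha
    have hv : v ∉ w := fun hv => by
      rcases hw.1 b v hadj.2 hadj.1 with h | h <;> simp_all [List.count_eq_zero]
    rw [polh.expect_map_of_exists_adj Sum.inl_injective hwh ⟨_, ha, hadj⟩]
    exact (tsum_congr fun u => by rw [hext.1 w hw v (fun h => hv h.2) u]).le
  push Not at hmatch
  rw [polh.expect_of_forall_not_adj hwh hmatch]
  by_cases hmatchG : ∃ a ∈ w, G.Adj a v
  · -- in `G` the arrival is matched with an item of its own class, which `Ĝ` stores instead
    calc pol.expect w v (fun u => Qfun G (u.map Sum.inl)) ≤ Qfun G (w.map Sum.inl) :=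
          pol.expect_le_of_exists_adj hw hmatchG (fun _ => Qfun_nonneg _)
            fun _ _ h => Qfun_le_of_sublist (h.map _)
      _ ≤ Qfun G (w.map Sum.inl ++ [Sum.inl v]) :=
          Qfun_le_of_sublist (List.sublist_append_left _ _)
  push Not at hmatchG
  rw [pol.expect_of_forall_not_adj hw hmatchG, List.map_append, List.map_singleton]

theorem expect_blowup_inr_eq (hext : ExtendsPolicy G pol polh) (hw : w ∈ WSpace G)
    (i : {v : V // G.Adj v v}) :
    polh.expect (w.map Sum.inl) (Sum.inr i) (Qfun G) =
      pol.expect w i.1 (fun u => Qfun G (u.map Sum.inl)) := by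
  have hwh := map_inl_mem_WSpace_blowup hw
  by_cases hmatch : ∃ a ∈ w, G.Adj a i.1
  · have hmatchh : ∃ a ∈ w.map Sum.inl, (blowup G).Adj a (Sum.inr i) := by
      obtain ⟨a, ha, hadj⟩ := hmatch
      exact ⟨Sum.inl a, List.mem_map_of_mem ha, G.symm a i.1 hadj⟩
    rw [polh.expect_map_of_exists_adj Sum.inl_injective hwh hmatchh]
    exact tsum_congr fun u => by rw [hext.2 w hw i hmatch u]
  push Not at hmatch
  have hmatchh : ∀ a ∈ w.map Sum.inl, ¬ (blowup G).Adj a (Sum.inr i) := by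
    simp only [List.mem_map, forall_exists_index, and_imp, forall_apply_eq_imp_iff₂]
    exact fun a ha hadj => hmatch a ha (G.symm i.1 a hadj)
  have hi : Sum.inl i.1 ∉ w.map (Sum.inl : V → V ⊕ {v : V // G.Adj v v}) := by
    simpa using fun hi => hmatch i.1 hi i.2
  rw [polh.expect_of_forall_not_adj hwh hmatchh, pol.expect_of_forall_not_adj hw hmatch,
    List.map_append, List.map_singleton, Qfun_append_singleton (by simp),
    Qfun_append_singleton hi]

theorem expect_blowupProj_le (hext : ExtendsPolicy G pol polh) (hw : w ∈ WSpace G)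
    (x : V ⊕ {v : V // G.Adj v v}) :
    pol.expect w (blowupProj G x) (fun u => Qfun G (u.map Sum.inl)) ≤
      polh.expect (w.map Sum.inl) x (Qfun G) := by
  cases x with
  | inl v => exact expect_le_expect_blowup_inl hext hw v
  | inr i => exact (expect_blowup_inr_eq hext hw i).ge

end Comparison

end Multigraph

theorem drift_quadratic_le_blowup_general {V : Type*} [Fintype V] [DecidableEq V]
    (G : Multigraph V)
    (pol : Policy G) (polh : Policy (blowup G)) (hext : ExtendsPolicy G pol polh)
    (μ : V → ℝ)
    (μh : V ⊕ {v : V // G.Adj v v} → ℝ) (hμh : FullSupport μh)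
    (hem : ExtendsMeasure G μ μh)
    (w : List V) (hw : w ∈ WSpace G) :
    drift G pol μ (fun u => Qfun G (u.map Sum.inl)) w ≤
      drift (blowup G) polh μh (Qfun G) (w.map Sum.inl) := by
  calc drift G pol μ (fun u => Qfun G (u.map Sum.inl)) w
      = ∑ x, μh x * pol.expect w (blowupProj G x) (fun u => Qfun G (u.map Sum.inl)) -
          Qfun G (w.map Sum.inl) := by
        rw [hem.sum_mul_comp_blowupProj fun v => pol.expect w v fun u => Qfun G (u.map Sum.inl)]
        rfl
    _ ≤ ∑ x, μh x * polh.expect (w.map Sum.inl) x (Qfun G) - Qfun G (w.map Sum.inl) := by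
        gcongr with x
        · exact (hμh.1 x).le
        · exact expect_blowupProj_le hext hw x
    _ = drift (blowup G) polh μh (Qfun G) (w.map Sum.inl) := rfl

/-- Drift comparison for the quadratic function `Q`: for an
admissible policy `Φ` on `G`, a policy `Φ̂` extending `Φ` on `Ĝ` and a measure `μ̂`
extending `μ`, for every `w ∈ 𝕎`, `Δ^Φ_μ Q(w) ≤ Δ̂^Φ̂_μ̂ Q(w)`. -/
theorem drift_quadratic_le_blowup {V : Type*} [Fintype V] [DecidableEq V]
    (G : Multigraph V) (hconn : G.Connected)
    (pol : Policy G) (polh : Policy (blowup G)) (hext : ExtendsPolicy G pol polh)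
    (μ : V → ℝ) (hμ : FullSupport μ)
    (μh : V ⊕ {v : V // G.Adj v v} → ℝ) (hμh : FullSupport μh)
    (hem : ExtendsMeasure G μ μh)
    (w : List V) (hw : w ∈ WSpace G) :
    drift G pol μ (fun u => Qfun G (u.map Sum.inl)) w ≤
      drift (blowup G) polh μh (Qfun G) (w.map Sum.inl) :=
  drift_quadratic_le_blowup_general G pol polh hext μ μh hμh hem w hw
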